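/- Let V : ℝ × ℝ → ℝ be a smooth function of (x,t) with V_xx(x,t) ≠ 0 for all (x,t), satisfying the evolution equation V_t = −1/V_xx. Define η : ℝ × ℝ → ℝ by η(x,t) = V_xxx / V_xx³ − 3·2^{−2/3} / V_xx − 2^{−1/3}·x. Then η satisfies the linearized equation ∂η/∂t = ( 1/V_xx² )·∂²η/∂x² at every point (x,t). -/

import Mathlib

/-- Partial derivative with respect to the first (space) variable. -/
noncomputable def pdx (f : ℝ × ℝ → ℝ) : ℝ × ℝ → ℝ :=
  fun p => deriv (fun x => f (x, p.2)) p.1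

/-- Partial derivative with respect to the second (time) variable. -/
noncomputable def pdt (f : ℝ × ℝ → ℝ) : ℝ × ℝ → ℝ :=
  fun p => deriv (fun t => f (p.1, t)) p.2

/-!
Put `u = V_t = -1/V_xx`. Since `∂_t V_xx = ∂_x² V_t = u_xx`, the function `u` solves the
fast-diffusion equation `u_t = u² u_xx`, and the linearized operator is `∂_t - u² ∂_x²`.
Moreover `V_xxx / V_xx³ = -u u_x`, so `η = -u u_x + c u - c' x`; a direct computation shows that
`a u u_x + b u + c x` solves the linearized equation for all constants `a, b, c`.
-/

section PartialDerivatives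

variable {f : ℝ × ℝ → ℝ} {p : ℝ × ℝ}

theorem hasDerivAt_pdx (hf : DifferentiableAt ℝ f p) :
    HasDerivAt (fun x => f (x, p.2)) (pdx f p) p.1 :=
  (hf.comp p.1 (differentiableAt_id.prodMk (differentiableAt_const _))).hasDerivAt

theorem hasDerivAt_pdt (hf : DifferentiableAt ℝ f p) :
    HasDerivAt (fun t => f (p.1, t)) (pdt f p) p.2 :=
  (hf.comp p.2 ((differentiableAt_const _).prodMk differentiableAt_id)).hasDerivAt

theorem pdx_eq_fderiv (hf : DifferentiableAt ℝ f p) : pdx f p = fderiv ℝ f p (1, 0) :=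
  (hf.hasFDerivAt.comp_hasDerivAt p.1 ((hasDerivAt_id _).prodMk (hasDerivAt_const _ _))).deriv

theorem pdt_eq_fderiv (hf : DifferentiableAt ℝ f p) : pdt f p = fderiv ℝ f p (0, 1) :=
  (hf.hasFDerivAt.comp_hasDerivAt p.2 ((hasDerivAt_const _ _).prodMk (hasDerivAt_id _))).deriv

theorem contDiff_pdx {m n : WithTop ℕ∞} (hf : ContDiff ℝ n f) (hmn : m + 1 ≤ n) :
    ContDiff ℝ m (pdx f) := by
  have hdf : Differentiable ℝ f :=
    hf.differentiable (zero_lt_one.trans_le (le_add_self.trans hmn)).ne'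
  rw [show pdx f = fun p => fderiv ℝ f p (1, 0) from funext fun p => pdx_eq_fderiv (hdf p)]
  exact (hf.fderiv_right hmn).clm_apply contDiff_const

theorem contDiff_pdt {m n : WithTop ℕ∞} (hf : ContDiff ℝ n f) (hmn : m + 1 ≤ n) :
    ContDiff ℝ m (pdt f) := by
  have hdf : Differentiable ℝ f :=
    hf.differentiable (zero_lt_one.trans_le (le_add_self.trans hmn)).ne'
  rw [show pdt f = fun p => fderiv ℝ f p (0, 1) from funext fun p => pdt_eq_fderiv (hdf p)]
  exact (hf.fderiv_right hmn).clm_apply contDiff_const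

theorem differentiable_pdx_pdx (hf : ContDiff ℝ 3 f) : Differentiable ℝ (pdx (pdx f)) :=
  (contDiff_pdx (contDiff_pdx (m := 2) hf (by norm_num)) (by norm_num)).differentiable one_ne_zero

theorem fderiv_fderiv_apply_const {E F : Type*} [NormedAddCommGroup E] [NormedSpace ℝ E]
    [NormedAddCommGroup F] [NormedSpace ℝ F] {g : E → F} {x : E}
    (hg : DifferentiableAt ℝ (fderiv ℝ g) x) (v w : E) :
    fderiv ℝ (fun y => fderiv ℝ g y v) x w = fderiv ℝ (fderiv ℝ g) x w v := by
  rw [fderiv_clm_apply hg (differentiableAt_const v)]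
  simp

theorem pdt_pdx_comm (hf : ContDiff ℝ 2 f) : pdt (pdx f) = pdx (pdt f) := by
  funext p
  have hdf : Differentiable ℝ f := hf.differentiable (by norm_num)
  have hf' : ContDiff ℝ 1 (fderiv ℝ f) := hf.fderiv_right (by norm_num)
  have hdf' : DifferentiableAt ℝ (fderiv ℝ f) p := (hf'.differentiable one_ne_zero) p
  have hx : pdx f = fun q => fderiv ℝ f q (1, 0) := funext fun q => pdx_eq_fderiv (hdf q)
  have ht : pdt f = fun q => fderiv ℝ f q (0, 1) := funext fun q => pdt_eq_fderiv (hdf q)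
  rw [hx, ht, pdt_eq_fderiv ((hf'.clm_apply contDiff_const).differentiable one_ne_zero p),
    pdx_eq_fderiv ((hf'.clm_apply contDiff_const).differentiable one_ne_zero p),
    fderiv_fderiv_apply_const hdf', fderiv_fderiv_apply_const hdf',
    (hf.contDiffAt.isSymmSndFDerivAt (by simp)).eq]

theorem pdx_neg_one_div (hf : DifferentiableAt ℝ f p) (hfp : f p ≠ 0) :
    pdx (fun q => -1 / f q) p = pdx f p / f p ^ 2 :=
  ((hasDerivAt_const _ (-1 : ℝ)).div (hasDerivAt_pdx hf) hfp).deriv.trans (by ring)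

theorem pdt_neg_one_div (hf : DifferentiableAt ℝ f p) (hfp : f p ≠ 0) :
    pdt (fun q => -1 / f q) p = pdt f p / f p ^ 2 :=
  ((hasDerivAt_const _ (-1 : ℝ)).div (hasDerivAt_pdt hf) hfp).deriv.trans (by ring)

theorem pdt_pdx_pdx_comm (hf : ContDiff ℝ 3 f) : pdt (pdx (pdx f)) = pdx (pdx (pdt f)) := by
  rw [pdt_pdx_comm (contDiff_pdx hf (by norm_num)), pdt_pdx_comm (hf.of_le (by norm_num))]

end PartialDerivatives

theorem pdt_pdt_eq_sq_mul_pdx_pdx_pdt {V : ℝ × ℝ → ℝ} (hV : ContDiff ℝ 3 V)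
    (heq : ∀ p, pdt V p = -1 / pdx (pdx V) p) (p : ℝ × ℝ) (hVxx : pdx (pdx V) p ≠ 0) :
    pdt (pdt V) p = pdt V p ^ 2 * pdx (pdx (pdt V)) p := by
  have hVtt : pdt (pdt V) p = pdt (pdx (pdx V)) p / pdx (pdx V) p ^ 2 := by
    rw [funext heq, pdt_neg_one_div (differentiable_pdx_pdx hV p) hVxx]
  rw [hVtt, pdt_pdx_pdx_comm hV, heq p]
  field_simp [hVxx]

theorem pdt_eq_sq_mul_pdx_pdx_of_combination {u : ℝ × ℝ → ℝ} (hu : ContDiff ℝ 3 u)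
    (heq : ∀ p, pdt u p = u p ^ 2 * pdx (pdx u) p) (a b c : ℝ) {η : ℝ × ℝ → ℝ}
    (hη : η = fun q => a * (u q * pdx u q) + b * u q + c * q.1) (p : ℝ × ℝ) :
    pdt η p = u p ^ 2 * pdx (pdx η) p := by
  have hux : ContDiff ℝ 2 (pdx u) := contDiff_pdx hu (by norm_num)
  have du : Differentiable ℝ u := hu.differentiable (by norm_num)
  have dux : Differentiable ℝ (pdx u) := hux.differentiable (by norm_num)
  have duxx : Differentiable ℝ (pdx (pdx u)) :=
    (contDiff_pdx hux (by norm_num)).differentiable one_ne_zero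
  have huxt : pdt (pdx u) p
      = 2 * u p * pdx u p * pdx (pdx u) p + u p ^ 2 * pdx (pdx (pdx u)) p := by
    rw [pdt_pdx_comm (hu.of_le (by norm_num)), funext heq]
    exact (((hasDerivAt_pdx (du p)).fun_pow 2).mul (hasDerivAt_pdx (duxx p))).deriv.trans
      (by ring)
  have hηt : pdt η p = a * (pdt u p * pdx u p + u p * pdt (pdx u) p) + b * pdt u p := by
    rw [hη]
    exact (((((hasDerivAt_pdt (du p)).mul (hasDerivAt_pdt (dux p))).const_mul a).add
      ((hasDerivAt_pdt (du p)).const_mul b)).add (hasDerivAt_const _ (c * p.1))).deriv.trans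
      (by ring)
  have hηx : pdx η = fun q => a * (pdx u q ^ 2 + u q * pdx (pdx u) q) + b * pdx u q + c := by
    funext q
    rw [hη]
    exact (((((hasDerivAt_pdx (du q)).mul (hasDerivAt_pdx (dux q))).const_mul a).add
      ((hasDerivAt_pdx (du q)).const_mul b)).add ((hasDerivAt_id q.1).const_mul c)).deriv.trans
      (by ring)
  have hηxx : pdx (pdx η) p = a * (3 * pdx u p * pdx (pdx u) p + u p * pdx (pdx (pdx u)) p)
      + b * pdx (pdx u) p := by
    rw [hηx]
    exact ((((((hasDerivAt_pdx (dux p)).fun_pow 2).add ((hasDerivAt_pdx (du p)).mul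
      (hasDerivAt_pdx (duxx p)))).const_mul a).add ((hasDerivAt_pdx (dux p)).const_mul b)).add
      (hasDerivAt_const _ c)).deriv.trans (by ring)
  rw [hηt, huxt, heq p, hηxx]
  ring

/-- Subcase 1.3b: for a solution of `V_t = −1/V_xx`, the function
`η = V_xxx / V_xx³ − 3·2^{−2/3} / V_xx − 2^{−1/3} x` satisfies the linearized
(Lie–Bäcklund symmetry) equation. -/
theorem subcase13b_third_order_symmetry
    (V : ℝ × ℝ → ℝ) (hV : ContDiff ℝ (⊤ : ℕ∞) V)
    (hVxx : ∀ p : ℝ × ℝ, pdx (pdx V) p ≠ 0)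
    (heq : ∀ p : ℝ × ℝ, pdt V p = -1 / pdx (pdx V) p)
    (η : ℝ × ℝ → ℝ)
    (hη : η = fun p =>
      pdx (pdx (pdx V)) p / (pdx (pdx V) p) ^ 3
        - 3 * (2 : ℝ) ^ (-(2 : ℝ) / 3) / pdx (pdx V) p
        - (2 : ℝ) ^ (-(1 : ℝ) / 3) * p.1) :
    ∀ p : ℝ × ℝ, pdt η p = (1 / (pdx (pdx V) p) ^ 2) * pdx (pdx η) p := by
  have hV3 : ContDiff ℝ 3 V := hV.of_le (WithTop.coe_le_coe.mpr le_top)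
  have hVt : ContDiff ℝ 3 (pdt V) := contDiff_pdt hV (WithTop.coe_le_coe.mpr le_top)
  have hη' : η = fun q => -1 * (pdt V q * pdx (pdt V) q)
      + 3 * (2 : ℝ) ^ (-(2 : ℝ) / 3) * pdt V q + -(2 : ℝ) ^ (-(1 : ℝ) / 3) * q.1 := by
    funext q
    rw [hη, funext heq, pdx_neg_one_div (differentiable_pdx_pdx hV3 q) (hVxx q)]
    field_simp [hVxx q]
    ring
  intro p
  rw [pdt_eq_sq_mul_pdx_pdx_of_combination hVt
    (fun q => pdt_pdt_eq_sq_mul_pdx_pdx_pdt hV3 heq q (hVxx q)) _ _ _ hη' p, heq p]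
  ring
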